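/- If the bipartite graph of A ∈ ℝ^{n×m} contains a cycle of length 2r with r ≥ 2, then there exist matrices B, C in the closure of the qualitative class of A such that the characteristic polynomial of BC^T equals λ^{n−r}(λ^r − 1) or λ^{n−r}(λ^r + 1); in particular BC^T has an eigenvalue not lying on the nonnegative real axis. -/

import Mathlib

/-!
Walk once around the cycle `i₀ j₀ i₁ j₁ … i_{r-1} j_{r-1}` of `Γ_A`. Let `B` carry the signs of
`A` on the edges `(iₖ, jₖ)` and `C` those on the edges `(iₖ₊₁, jₖ)`, with zeros elsewhere. As the
`iₖ` and the `jₖ` are distinct, `B Cᵀ = ∑ₖ εₖ E_{iₖ, iₖ₊₁}` with `εₖ = ±1`: a signed cyclic shift on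
the rows of the cycle, padded by zero rows. Its characteristic polynomial is
`λ^{n-r} (λ^r - ∏ εₖ)` with `∏ εₖ = ±1`, and a root of `λ^r = 1` other than `1` (this needs
`r ≥ 2`), or any root of `λ^r = -1`, is not a nonnegative real.
-/

open Matrix Polynomial

/-- The closure of the qualitative class of `A`: each entry is either zero or has the same
sign as the corresponding entry of `A`. -/
def Qual0 {n m : ℕ} (A : Matrix (Fin n) (Fin m) ℝ) : Set (Matrix (Fin n) (Fin m) ℝ) :=
  {B | ∀ i j, B i j = 0 ∨ Real.sign (B i j) = Real.sign (A i j)}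

/-- The bipartite graph `Γ_A` of a matrix `A`. -/
def bipartiteGraph {n m : ℕ} (A : Matrix (Fin n) (Fin m) ℝ) : SimpleGraph (Fin n ⊕ Fin m) :=
  SimpleGraph.fromRel (fun x y => ∃ i j, x = Sum.inl i ∧ y = Sum.inr j ∧ A i j ≠ 0)

open Function

theorem Fin.eq_add_one_iff_val {r : ℕ} {k l : Fin (r + 1)} :
    l = k + 1 ↔ (l : ℕ) = k + 1 ∨ (k : ℕ) = r ∧ (l : ℕ) = 0 := by
  rw [Fin.ext_iff, Fin.val_add_one]
  split_ifs with h
  · rw [h, Fin.val_last]; omega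
  · have := Fin.val_lt_last h; omega

section Charpoly
variable {R : Type*} [CommRing R]

theorem charpoly_eq_charpoly_submatrix_mul_X_pow {ι κ : Type*} [Fintype ι] [DecidableEq ι]
    [Fintype κ] [DecidableEq κ] (M : Matrix κ κ R) {i : ι → κ} (hi : Injective i)
    (hM : ∀ a ∉ Set.range i, ∀ b, M a b = 0) :
    M.charpoly = (M.submatrix i i).charpoly * X ^ (Fintype.card κ - Fintype.card ι) := by
  let e : ι ⊕ {a // a ∉ Set.range i} ≃ κ :=
    ((Equiv.ofInjective i hi).sumCongr (Equiv.refl _)).trans (Equiv.sumCompl (· ∈ Set.range i))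
  have hblocks : M.submatrix e e = fromBlocks (M.submatrix i i) (M.submatrix i (↑)) 0 0 := by
    ext (k | ⟨a, ha⟩) (l | b) <;> simp [e, *]
  rw [← charpoly_reindex e.symm, reindex_apply, Equiv.symm_symm, hblocks,
    charpoly_fromBlocks_zero₂₁, charpoly_zero, Fintype.card_subtype_compl,
    Set.card_range_of_injective hi]

def cycleShift {r : ℕ} [NeZero r] (ε : Fin r → R) : Matrix (Fin r) (Fin r) R :=
  Matrix.of fun k l => if l = k + 1 then ε k else 0

theorem charpoly_cycleShift {r : ℕ} (hr : r ≠ 0) (ε : Fin (r + 1) → R) :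
    (cycleShift ε).charpoly = X ^ (r + 1) - C (∏ k, ε k) := by
  have hoff {k l} (hkl : k ≠ l) :
      (cycleShift ε).charmatrix k l = if l = k + 1 then -C (ε k) else 0 := by
    rw [charmatrix_apply_ne _ _ _ hkl]
    simp only [cycleShift, of_apply]
    split_ifs <;> simp
  have hdiag k : (cycleShift ε).charmatrix k k = X := by
    have : k ≠ k + 1 := by rw [Ne, Fin.eq_add_one_iff_val]; omega
    simp [charmatrix_apply_eq, cycleShift, this]
  have hupper : ((cycleShift ε).charmatrix.submatrix Fin.succ Fin.succ).det = X ^ r := by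
    rw [det_of_isUpperTriangular]
    · simp only [submatrix_apply, hdiag, Finset.prod_const, Finset.card_univ, Fintype.card_fin]
    · intro a b (hba : (b : ℕ) < a)
      rw [submatrix_apply, hoff (by simp only [ne_eq, Fin.ext_iff, Fin.val_succ]; omega),
        if_neg (by simp only [Fin.eq_add_one_iff_val, Fin.val_succ]; omega)]
  have hlower : ((cycleShift ε).charmatrix.submatrix Fin.castSucc Fin.succ).det =
      ∏ k : Fin r, -C (ε k.castSucc) := by
    rw [det_of_isLowerTriangular]
    · refine Finset.prod_congr rfl fun k _ => ?_
      rw [submatrix_apply, hoff (by simp [Fin.ext_iff]), if_pos Fin.coeSucc_eq_succ.symm]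
    · intro a b (hab : (a : ℕ) < b)
      rw [submatrix_apply,
        hoff (by simp only [ne_eq, Fin.ext_iff, Fin.val_castSucc, Fin.val_succ]; omega),
        if_neg (by simp only [Fin.eq_add_one_iff_val, Fin.val_castSucc, Fin.val_succ]; omega)]
  have hlast : Fin.last r ≠ 0 := by simp only [ne_eq, Fin.ext_iff, Fin.val_last]; simpa
  -- Expand along column 0, whose nonzero entries lie in rows `0` and `last`.
  rw [charpoly, det_succ_column_zero, Fintype.sum_eq_add 0 (Fin.last r) hlast.symm ?_]
  · rw [Fin.succAbove_zero, Fin.succAbove_last, hupper, hlower, hdiag, hoff hlast,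
      if_pos (Fin.last_add_one r).symm, Finset.prod_neg, Fin.prod_univ_castSucc, map_mul,
      map_prod, Fin.val_zero, Fin.val_last, Finset.card_univ, Fintype.card_fin]
    have hsq : ((-1 : R[X]) ^ r) * (-1) ^ r = 1 := by rw [← mul_pow]; simp
    linear_combination (-C (ε (Fin.last r)) * ∏ k : Fin r, C (ε k.castSucc)) * hsq
  · rintro k ⟨h0, hk⟩
    have := Fin.val_lt_last hk
    rw [hoff h0, if_neg (by simp only [Fin.eq_add_one_iff_val, Fin.val_zero]; omega)]
    simp

end Charpoly

section Bipartite
variable {n m : ℕ} {A : Matrix (Fin n) (Fin m) ℝ}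

@[simp]
theorem bipartiteGraph_adj_inl_inr {a : Fin n} {b : Fin m} :
    (bipartiteGraph A).Adj (.inl a) (.inr b) ↔ A a b ≠ 0 := by
  simp [bipartiteGraph]

@[simp]
theorem bipartiteGraph_adj_inr_inl {a : Fin n} {b : Fin m} :
    (bipartiteGraph A).Adj (.inr b) (.inl a) ↔ A a b ≠ 0 := by
  simp [bipartiteGraph]

@[simp]
theorem not_bipartiteGraph_adj_inl_inl {a a' : Fin n} :
    ¬ (bipartiteGraph A).Adj (.inl a) (.inl a') := by
  simp [bipartiteGraph]

@[simp]
theorem not_bipartiteGraph_adj_inr_inr {b b' : Fin m} :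
    ¬ (bipartiteGraph A).Adj (.inr b) (.inr b') := by
  simp [bipartiteGraph]

theorem isLeft_getVert_iff_even {a : Fin n} {u : Fin n ⊕ Fin m}
    (w : (bipartiteGraph A).Walk (.inl a) u) {t : ℕ} (ht : t ≤ w.length) :
    (w.getVert t).isLeft ↔ Even t := by
  induction t with
  | zero => simp
  | succ t ih =>
    have hadj := w.adj_getVert_succ (i := t) (by omega)
    rw [Nat.even_add_one, ← ih (by omega)]
    generalize w.getVert t = x at hadj
    generalize w.getVert (t + 1) = y at hadj
    rcases x with x | x <;> rcases y with y | y <;> simp_all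

end Bipartite

namespace SimpleGraph.Walk
variable {V : Type*} {G : SimpleGraph V} {v : V}

theorem getVert_two_mul_val_add_one {r : ℕ} [NeZero r] {c : G.Walk v v}
    (hc : c.length = 2 * r) (k : Fin r) :
    c.getVert (2 * ((k + 1 : Fin r) : ℕ)) = c.getVert (2 * k + 2) := by
  rcases (show (k : ℕ) + 1 < r ∨ (k : ℕ) + 1 = r by omega) with hk | hk
  · rw [Fin.val_add_one_of_lt' hk, mul_add, mul_one]
  · have : k + 1 = 0 := by ext; simp [Fin.val_add, hk]
    rw [this, show 2 * k + 2 = c.length by omega, getVert_length, Fin.val_zero, mul_zero,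
      getVert_zero]

end SimpleGraph.Walk

theorem exists_isCycle_inl_of_isCycle {n m L : ℕ} {A : Matrix (Fin n) (Fin m) ℝ}
    (h : ∃ (v : Fin n ⊕ Fin m) (c : (bipartiteGraph A).Walk v v), c.IsCycle ∧ c.length = L) :
    ∃ (a : Fin n) (c : (bipartiteGraph A).Walk (.inl a) (.inl a)), c.IsCycle ∧ c.length = L := by
  obtain ⟨v, c, hc, hL⟩ := h
  rcases v with a | b
  · exact ⟨a, c, hc, hL⟩
  · obtain ⟨a, ha⟩ : ∃ a, c.snd = .inl a := by
      have hadj := c.adj_snd hc.not_nil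
      generalize c.snd = y at hadj
      rcases y with a | b'
      · exact ⟨a, rfl⟩
      · simp at hadj
    refine ⟨a, (c.rotate c.snd (c.getVert_mem_support 1)).copy ha ha, ?_, ?_⟩
    · simpa using hc
    · simpa using hL

theorem exists_alternating_cycle {n m r : ℕ} [NeZero r] {A : Matrix (Fin n) (Fin m) ℝ}
    (hcyc : ∃ (v : Fin n ⊕ Fin m) (c : (bipartiteGraph A).Walk v v),
      c.IsCycle ∧ c.length = 2 * r) :
    ∃ (i : Fin r → Fin n) (j : Fin r → Fin m), Injective i ∧ Injective j ∧
      (∀ k, A (i k) (j k) ≠ 0) ∧ ∀ k, A (i (k + 1)) (j k) ≠ 0 := by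
  obtain ⟨a, c, hc, hL⟩ := exists_isCycle_inl_of_isCycle hcyc
  have hrow (k : Fin r) : ∃ a', c.getVert (2 * k) = .inl a' :=
    Sum.isLeft_iff.mp ((isLeft_getVert_iff_even c (by omega)).mpr (even_two_mul _))
  have hcol (k : Fin r) : ∃ b, c.getVert (2 * k + 1) = .inr b := by
    have := (isLeft_getVert_iff_even c (t := 2 * k + 1) (by omega)).not
    simpa [Nat.even_add_one, Sum.isRight_iff] using this
  choose i hi using hrow
  choose j hj using hcol
  have hinj {t t' : ℕ} (ht : t < 2 * r) (ht' : t' < 2 * r) (h : c.getVert t = c.getVert t') :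
      t = t' :=
    hc.getVert_injOn' (by rw [Set.mem_ofPred_eq]; omega) (by rw [Set.mem_ofPred_eq]; omega) h
  refine ⟨i, j, fun k k' h => ?_, fun k k' h => ?_, fun k => ?_, fun k => ?_⟩
  · have := hinj (t := 2 * k) (t' := 2 * k') (by omega) (by omega) (by rw [hi, hi, h])
    omega
  · have := hinj (t := 2 * k + 1) (t' := 2 * k' + 1) (by omega) (by omega) (by rw [hj, hj, h])
    omega
  · simpa [hi, hj] using c.adj_getVert_succ (i := 2 * k) (by omega)
  · have := c.adj_getVert_succ (i := 2 * k + 1) (by omega)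
    rwa [hj, ← c.getVert_two_mul_val_add_one hL, hi, bipartiteGraph_adj_inr_inl] at this

theorem Real.sign_sign (x : ℝ) : Real.sign (Real.sign x) = Real.sign x := by
  rcases Real.sign_apply_eq x with h | h | h <;> rw [h] <;>
    norm_num [Real.sign_of_neg, Real.sign_zero, Real.sign_one]

theorem Real.sign_mul_self_of_ne_zero {x : ℝ} (hx : x ≠ 0) : Real.sign x * Real.sign x = 1 := by
  rcases Real.sign_apply_eq_of_ne_zero x hx with h | h <;> rw [h] <;> norm_num

noncomputable def signMask {n m : ℕ} (A : Matrix (Fin n) (Fin m) ℝ) (S : Set (Fin n × Fin m)) :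
    Matrix (Fin n) (Fin m) ℝ :=
  open Classical in Matrix.of fun a b => if (a, b) ∈ S then Real.sign (A a b) else 0

theorem signMask_mem_Qual0 {n m : ℕ} (A : Matrix (Fin n) (Fin m) ℝ) (S : Set (Fin n × Fin m)) :
    signMask A S ∈ Qual0 A := by
  intro a b
  by_cases h : (a, b) ∈ S <;> simp [signMask, h, Real.sign_sign]

section SignPattern
variable {n m : ℕ} (A : Matrix (Fin n) (Fin m) ℝ)

theorem signMask_mul_transpose_apply_of_notMem {S T : Set (Fin n × Fin m)} {a : Fin n}
    (ha : ∀ b, (a, b) ∉ S) (a' : Fin n) :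
    (signMask A S * (signMask A T)ᵀ) a a' = 0 := by
  simp [mul_apply, signMask, ha]

theorem submatrix_signMask_mul_transpose {r : ℕ} [NeZero r] {i : Fin r → Fin n}
    {j : Fin r → Fin m} (hi : Injective i) (hj : Injective j) :
    (signMask A (Set.range fun k => (i k, j k)) *
        (signMask A (Set.range fun k => (i (k + 1), j k)))ᵀ).submatrix i i =
      cycleShift fun k => Real.sign (A (i k) (j k)) * Real.sign (A (i (k + 1)) (j k)) := by
  ext k l
  simp only [submatrix_apply, mul_apply, transpose_apply, cycleShift, of_apply]
  rw [Finset.sum_eq_single (j k)]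
  · simp only [signMask, of_apply, Set.mem_range, Prod.mk.injEq, hi.eq_iff, hj.eq_iff,
      exists_eq_right, if_true, eq_comm (a := k + 1)]
    split_ifs with h
    · rw [h]
    · rw [mul_zero]
  · intro b _ hb
    simp [signMask, hi.eq_iff, hb.symm]
  · simp

theorem charpoly_signMask_mul_transpose {r : ℕ} (hr : r ≠ 0) {i : Fin (r + 1) → Fin n}
    {j : Fin (r + 1) → Fin m} (hi : Injective i) (hj : Injective j) :
    (signMask A (Set.range fun k => (i k, j k)) *
        (signMask A (Set.range fun k => (i (k + 1), j k)))ᵀ).charpoly =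
      X ^ (n - (r + 1)) *
        (X ^ (r + 1) - C (∏ k, Real.sign (A (i k) (j k)) * Real.sign (A (i (k + 1)) (j k)))) := by
  rw [charpoly_eq_charpoly_submatrix_mul_X_pow _ hi, submatrix_signMask_mul_transpose A hi hj,
    charpoly_cycleShift hr, Fintype.card_fin, Fintype.card_fin, mul_comm]
  exact fun a ha => signMask_mul_transpose_apply_of_notMem A
    fun b ⟨k, hk⟩ => ha ⟨k, congrArg Prod.fst hk⟩

end SignPattern

theorem prod_eq_one_or_neg_one_of_mul_self_eq_one {ι R : Type*} [Fintype ι] [CommRing R]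
    [NoZeroDivisors R] {ε : ι → R} (h : ∀ k, ε k * ε k = 1) :
    ∏ k, ε k = 1 ∨ ∏ k, ε k = -1 :=
  mul_self_eq_one_iff.mp (by rw [← Finset.prod_mul_distrib]; simp [h])

theorem exists_pow_eq_not_nonneg_real {r : ℕ} (hr : 2 ≤ r) {s : ℝ} (hs : s = 1 ∨ s = -1) :
    ∃ z : ℂ, z ^ r = s ∧ ¬ ∃ x : ℝ, 0 ≤ x ∧ z = x := by
  obtain ⟨z, hz, hz1⟩ : ∃ z : ℂ, z ^ r = s ∧ z ≠ 1 := by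
    rcases hs with rfl | rfl
    · have hprim := Complex.isPrimitiveRoot_exp r (by omega)
      exact ⟨_, by simpa using hprim.pow_eq_one, hprim.ne_one (by omega)⟩
    · obtain ⟨z, hz⟩ := IsAlgClosed.exists_pow_nat_eq (-1 : ℂ) (by omega : 0 < r)
      refine ⟨z, by simpa using hz, ?_⟩
      rintro rfl
      norm_num at hz
  refine ⟨z, hz, ?_⟩
  rintro ⟨x, hx, rfl⟩
  have hxs : x ^ r = s := by exact_mod_cast hz
  have hs1 : s = 1 := by
    rcases hs with hs | hs
    · exact hs
    · linarith [pow_nonneg hx r]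
  rw [hs1, pow_eq_one_iff_of_nonneg hx (by omega)] at hxs
  exact hz1 (by simp [hxs])

/-- if `Γ_A` contains a cycle of length `2r` with `r ≥ 2`, then there exist
`B, C` in the closure of the qualitative class of `A` such that the characteristic polynomial
of `B Cᵀ` is `λ^{n-r}(λ^r - 1)` or `λ^{n-r}(λ^r + 1)`; in particular `B Cᵀ` has an eigenvalue
not on the nonnegative real axis. -/
theorem cycle_gives_bad_spectrum {n m r : ℕ} (A : Matrix (Fin n) (Fin m) ℝ) (hr : 2 ≤ r)
    (hcyc : ∃ (v : Fin n ⊕ Fin m) (c : (bipartiteGraph A).Walk v v),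
      c.IsCycle ∧ c.length = 2 * r) :
    ∃ B ∈ Qual0 A, ∃ C ∈ Qual0 A,
      ((B * Cᵀ).charpoly = X ^ (n - r) * (X ^ r - 1) ∨
        (B * Cᵀ).charpoly = X ^ (n - r) * (X ^ r + 1)) ∧
      ∃ z : ℂ, (((B * Cᵀ).charpoly).map (algebraMap ℝ ℂ)).IsRoot z ∧
        ¬ ∃ x : ℝ, 0 ≤ x ∧ z = x := by
  obtain ⟨r, rfl⟩ : ∃ r', r = r' + 1 := ⟨r - 1, by omega⟩
  obtain ⟨i, j, hi, hj, hA, hA'⟩ := exists_alternating_cycle hcyc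
  have hchar := charpoly_signMask_mul_transpose A (by omega) hi hj
  have hs := prod_eq_one_or_neg_one_of_mul_self_eq_one
    (ε := fun k => Real.sign (A (i k) (j k)) * Real.sign (A (i (k + 1)) (j k))) fun k => by
    rw [mul_mul_mul_comm, Real.sign_mul_self_of_ne_zero (hA k),
      Real.sign_mul_self_of_ne_zero (hA' k), one_mul]
  obtain ⟨z, hz, hz_not_nonneg⟩ := exists_pow_eq_not_nonneg_real hr hs
  refine ⟨_, signMask_mem_Qual0 A (Set.range fun k => (i k, j k)),
    _, signMask_mem_Qual0 A (Set.range fun k => (i (k + 1), j k)), ?_, z, ?_, hz_not_nonneg⟩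
  · rcases hs with hs | hs <;> simp [hchar, hs, sub_eq_add_neg]
  · simp [hchar, hz]
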